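/- Let Γ be a positive bounded linear operator on a Hilbert space X and let ε > 0. Then I − ε(εI + Γ)⁻¹π_M is boundedly invertible, the operator ε(I − π_M) + Γ is boundedly invertible, and (ε(I − π_M) + Γ)⁻¹ = (I − ε(εI + Γ)⁻¹π_M)⁻¹ (εI + Γ)⁻¹. -/

import Mathlib

open scoped RealInnerProductSpace
open Filter

/-- The orthogonal projection of `X` onto the subspace `M`, as a continuous linear map. -/
noncomputable def finProj {X : Type*} [NormedAddCommGroup X] [InnerProductSpace ℝ X]
    (M : Submodule ℝ X) [CompleteSpace M] : X →L[ℝ] X :=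
  M.subtypeL ∘L Submodule.orthogonalProjection M

/-!
Write `A = εI + Γ`, `R = A⁻¹` and `P = π_M`. Then `ε(I − P) + Γ = A (I − εRP)`, and this operator
is injective since `⟪(ε(I − P) + Γ)x, x⟫ ≥ ⟪Γx, x⟫ > 0` for `x ≠ 0`; hence `I − εRP` is injective.
As `εRP` factors through the finite-dimensional `M`, the push-through identity
`(I − uv)⁻¹ = I + u(I − vu)⁻¹v` reduces the invertibility of `I − εRP` to that of an injective
endomorphism of `M`, which is automatic.
-/

namespace ContinuousLinearMap

section PushThrough

variable {R E F : Type*} [Ring R] [TopologicalSpace E] [AddCommGroup E] [IsTopologicalAddGroup E]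
  [Module R E] [TopologicalSpace F] [AddCommGroup F] [IsTopologicalAddGroup F] [Module R F]
  (u : F →L[R] E) (v : E →L[R] F) {w : F →L[R] F}

theorem one_add_comp_comp_comp_one_sub_comp_eq_one (hw : w ∘L (1 - v ∘L u) = 1) :
    (1 + u ∘L w ∘L v) ∘L (1 - u ∘L v) = 1 :=
  calc (1 + u ∘L w ∘L v) ∘L (1 - u ∘L v) = 1 - u ∘L v + u ∘L (w ∘L (1 - v ∘L u)) ∘L v := by
        ext x; simp only [comp_apply, add_apply, sub_apply, one_apply_eq_self, map_sub]; abel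
    _ = 1 := by rw [hw]; ext x; simp

theorem one_sub_comp_comp_one_add_comp_comp_eq_one (hw : (1 - v ∘L u) ∘L w = 1) :
    (1 - u ∘L v) ∘L (1 + u ∘L w ∘L v) = 1 :=
  calc (1 - u ∘L v) ∘L (1 + u ∘L w ∘L v) = 1 - u ∘L v + u ∘L ((1 - v ∘L u) ∘L w) ∘L v := by
        ext x; simp only [comp_apply, add_apply, sub_apply, one_apply_eq_self, map_add, map_sub]
    _ = 1 := by rw [hw]; ext x; simp

theorem injective_one_sub_comp_swap (h : Function.Injective ⇑(1 - u ∘L v)) :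
    Function.Injective ⇑(1 - v ∘L u) := by
  refine (injective_iff_map_eq_zero _).2 fun y hy => ?_
  have hy' : v (u y) = y := (sub_eq_zero.1 hy).symm
  have huy : (1 - u ∘L v) (u y) = 0 := by simp [hy']
  rw [← hy', (injective_iff_map_eq_zero _).1 h _ huy, map_zero]

end PushThrough

theorem exists_inverse_one_sub_comp_of_injective {𝕜 E F : Type*} [NontriviallyNormedField 𝕜]
    [CompleteSpace 𝕜] [NormedAddCommGroup E] [NormedSpace 𝕜 E] [NormedAddCommGroup F]
    [NormedSpace 𝕜 F] [FiniteDimensional 𝕜 F] (u : F →L[𝕜] E) (v : E →L[𝕜] F)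
    (h : Function.Injective ⇑(1 - u ∘L v)) :
    ∃ S : E →L[𝕜] E, S ∘L (1 - u ∘L v) = 1 ∧ (1 - u ∘L v) ∘L S = 1 := by
  let e : F ≃L[𝕜] F := (LinearEquiv.ofInjectiveEndo _
    (injective_one_sub_comp_swap u v h)).toContinuousLinearEquiv
  have he : (e : F →L[𝕜] F) = 1 - v ∘L u := rfl
  refine ⟨1 + u ∘L (e.symm : F →L[𝕜] F) ∘L v, one_add_comp_comp_comp_one_sub_comp_eq_one u v ?_,
    one_sub_comp_comp_one_add_comp_comp_eq_one u v ?_⟩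
  · rw [← he, one_def, ← e.coe_symm_comp_coe]
  · rw [← he, one_def, ← e.coe_comp_coe_symm]

theorem injective_of_inner_self_pos {X : Type*} [NormedAddCommGroup X] [InnerProductSpace ℝ X]
    {T : X →L[ℝ] X} (hT : ∀ x, x ≠ 0 → 0 < ⟪T x, x⟫) : Function.Injective T :=
  (injective_iff_map_eq_zero T).2 fun x hx => by_contra fun hx0 => by
    simpa [hx] using hT x hx0

end ContinuousLinearMap

namespace Submodule

open ContinuousLinearMap

variable {X : Type*} [NormedAddCommGroup X] [InnerProductSpace ℝ X]
  (K : Submodule ℝ X) [K.HasOrthogonalProjection]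

theorem inner_one_sub_starProjection_self_nonneg (x : X) :
    0 ≤ ⟪(1 - K.starProjection) x, x⟫ := by
  simpa [← starProjection_orthogonal'] using Kᗮ.re_inner_starProjection_nonneg x

theorem injective_smul_one_sub_starProjection_add {ε : ℝ} (hε : 0 ≤ ε) {Γ : X →L[ℝ] X}
    (hΓ : ∀ x, x ≠ 0 → 0 < ⟪Γ x, x⟫) : Function.Injective ⇑(ε • (1 - K.starProjection) + Γ) :=
  injective_of_inner_self_pos fun x hx => by
    have hK := mul_nonneg hε (K.inner_one_sub_starProjection_self_nonneg x)
    have hΓx := hΓ x hx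
    simp only [add_apply, smul_apply, inner_add_left, real_inner_smul_left]
    linarith

end Submodule

open ContinuousLinearMap

theorem resolvent_like_factorization_general
    {X : Type*} [NormedAddCommGroup X] [InnerProductSpace ℝ X]
    (M : Submodule ℝ X) [FiniteDimensional ℝ M]
    (Γ : X →L[ℝ] X)
    (hΓpos : ∀ x : X, x ≠ 0 → 0 < ⟪Γ x, x⟫)
    (ε : ℝ) (hε : 0 < ε)
    (R : X →L[ℝ] X)
    (hR : R ∘L (ε • (1 : X →L[ℝ] X) + Γ) = 1 ∧ (ε • (1 : X →L[ℝ] X) + Γ) ∘L R = 1) :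
    ∃ S Q : X →L[ℝ] X,
      (S ∘L ((1 : X →L[ℝ] X) - ε • (R ∘L finProj M)) = 1 ∧
        ((1 : X →L[ℝ] X) - ε • (R ∘L finProj M)) ∘L S = 1) ∧
      (Q ∘L (ε • ((1 : X →L[ℝ] X) - finProj M) + Γ) = 1 ∧
        (ε • ((1 : X →L[ℝ] X) - finProj M) + Γ) ∘L Q = 1) ∧
      Q = S ∘L R := by
  obtain ⟨hRA, hAR⟩ := hR
  set A := ε • (1 : X →L[ℝ] X) + Γ
  set D := ε • ((1 : X →L[ℝ] X) - finProj M) + Γ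
  set T := (1 : X →L[ℝ] X) - ε • (R ∘L finProj M)
  have hAT : A ∘L T = D := by
    rw [comp_sub, comp_smul, ← comp_assoc, hAR]
    simp only [A, D, one_def, comp_id, id_comp, smul_sub]
    abel
  have hRD : R ∘L D = T := by rw [← hAT, ← comp_assoc, hRA]; rfl
  have hR_inj : Function.Injective R :=
    Function.LeftInverse.injective (g := A) fun x => congr($hAR x)
  have hD_inj : Function.Injective D := M.injective_smul_one_sub_starProjection_add hε.le hΓpos
  have hT_inj : Function.Injective T := hRD ▸ hR_inj.comp hD_inj
  have hT : T = 1 - (ε • (R ∘L M.subtypeL)) ∘L M.orthogonalProjectionOnto := by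
    simp only [T, finProj, smul_comp, comp_assoc]
  obtain ⟨S, hST, hTS⟩ := exists_inverse_one_sub_comp_of_injective _ _ (hT ▸ hT_inj)
  rw [← hT] at hST hTS
  refine ⟨S, S ∘L R, ⟨hST, hTS⟩, ⟨?_, ?_⟩, rfl⟩
  · rw [comp_assoc, hRD, hST]
  · rw [← hAT, comp_assoc, ← comp_assoc T, hTS]; exact hAR

/-- Let `Γ` be a positive bounded linear operator on a Hilbert space `X` and
`ε > 0`. Then `I − ε(εI + Γ)⁻¹π_M` is boundedly invertible, `ε(I − π_M) + Γ` is boundedly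
invertible, and `(ε(I − π_M) + Γ)⁻¹ = (I − ε(εI + Γ)⁻¹π_M)⁻¹ (εI + Γ)⁻¹`. -/
theorem resolvent_like_factorization
    {X : Type*} [NormedAddCommGroup X] [InnerProductSpace ℝ X] [CompleteSpace X]
    (M : Submodule ℝ X) [FiniteDimensional ℝ M]
    (Γ : X →L[ℝ] X) (hΓsa : IsSelfAdjoint Γ)
    (hΓpos : ∀ x : X, x ≠ 0 → 0 < ⟪Γ x, x⟫)
    (ε : ℝ) (hε : 0 < ε)
    (R : X →L[ℝ] X)
    (hR : R ∘L (ε • (1 : X →L[ℝ] X) + Γ) = 1 ∧ (ε • (1 : X →L[ℝ] X) + Γ) ∘L R = 1) :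
    ∃ S Q : X →L[ℝ] X,
      (S ∘L ((1 : X →L[ℝ] X) - ε • (R ∘L finProj M)) = 1 ∧
        ((1 : X →L[ℝ] X) - ε • (R ∘L finProj M)) ∘L S = 1) ∧
      (Q ∘L (ε • ((1 : X →L[ℝ] X) - finProj M) + Γ) = 1 ∧
        (ε • ((1 : X →L[ℝ] X) - finProj M) + Γ) ∘L Q = 1) ∧
      Q = S ∘L R :=
  resolvent_like_factorization_general M Γ hΓpos ε hε R hR
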